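/- arXiv:2402.02223 — 2 statements merged into one kernel-verified Lean document; each statement's English description precedes it below -/
import Mathlib

section
/- The expected value of the average sockuence of a uniformly random r-matching on [rn] equals (r−1)(rn+1)/(2(r+1)); that is, E[(1/(rn)) Σ_{k=1}^{rn} X_k^{(r)}] = (r−1)(rn+1)/(2(r+1)). -/
open Finset
open scoped Classical

/-- An `r`-matching on `[r*n] = {1,...,r*n}`: a partition of `Finset.Icc 1 (r*n)`
into `r`-element blocks. -/
def IsRMatching (r n : ℕ) (M : Finset (Finset ℕ)) : Prop :=
  (∀ e ∈ M, e.card = r) ∧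
  (∀ e ∈ M, ∀ f ∈ M, e ≠ f → Disjoint e f) ∧
  M.biUnion id = Finset.Icc 1 (r * n)

/-- The finite set of all `r`-matchings on `[r*n]`. -/
noncomputable def matchings (r n : ℕ) : Finset (Finset (Finset ℕ)) :=
  ((Finset.Icc 1 (r * n)).powerset.powerset).filter (IsRMatching r n)

/-- `x_k(M) = Σ_{e ∈ M_k} |e ∩ [k]|`, summed over blocks `e` meeting both `[k]`
and its complement. -/
noncomputable def sockAt (k : ℕ) (M : Finset (Finset ℕ)) : ℕ :=
  ∑ e ∈ M.filter
      (fun e => (e ∩ Finset.Icc 1 k).Nonempty ∧ (e \ Finset.Icc 1 k).Nonempty),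
    (e ∩ Finset.Icc 1 k).card

/-- For `r = 2`: the number of edges with one endpoint in `[k]` and one outside. -/
noncomputable def crossAt (k : ℕ) (M : Finset (Finset ℕ)) : ℕ :=
  (M.filter
      (fun e => (e ∩ Finset.Icc 1 k).Nonempty ∧ (e \ Finset.Icc 1 k).Nonempty)).card

/-- The sock number of a matching on `[2n]`: `max_{1 ≤ k ≤ 2n} x_k(M)`. -/
noncomputable def sockNum (n : ℕ) (M : Finset (Finset ℕ)) : ℕ :=
  (Finset.Icc 1 (2 * n)).sup (fun k => crossAt k M)

lemma mem_matchings {r n : ℕ} {M : Finset (Finset ℕ)} :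
    M ∈ matchings r n ↔ IsRMatching r n M := by
  constructor
  · exact fun h => (Finset.mem_filter.mp h).2
  · intro h
    refine Finset.mem_filter.mpr ⟨?_, h⟩
    rw [Finset.mem_powerset]
    intro b hb
    rw [Finset.mem_powerset]
    intro x hx
    rw [← h.2.2]
    exact Finset.mem_biUnion.mpr ⟨b, hb, hx⟩

lemma block_subset {r n : ℕ} {M : Finset (Finset ℕ)} (hM : IsRMatching r n M) {b} (hb : b ∈ M) :
    b ⊆ Finset.Icc 1 (r * n) := by
  intro x hx; rw [← hM.2.2]; exact Finset.mem_biUnion.mpr ⟨b, hb, hx⟩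

lemma card_blocks {r n : ℕ} (hr : 1 ≤ r) {M} (hM : IsRMatching r n M) : M.card = n := by
  have h1 : ∑ e ∈ M, e.card = (M.biUnion id).card :=
    (Finset.card_biUnion (fun e he f hf hef => hM.2.1 e he f hf hef)).symm
  have h2 : ∑ e ∈ M, e.card = r * M.card := by
    rw [Finset.sum_congr rfl (fun e he => hM.1 e he), Finset.sum_const, smul_eq_mul, mul_comm]
  rw [h2, hM.2.2, Nat.card_Icc] at h1
  have h3 : r * M.card = r * n := by omega
  exact Nat.eq_of_mul_eq_mul_left (by omega) h3

lemma inter_eq_filter {m k : ℕ} {e : Finset ℕ} (he : e ⊆ Finset.Icc 1 m) :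
    e ∩ Finset.Icc 1 k = e.filter (· ≤ k) := by
  ext x
  simp only [Finset.mem_inter, Finset.mem_filter, Finset.mem_Icc]
  constructor
  · rintro ⟨hx, _, h2⟩; exact ⟨hx, h2⟩
  · rintro ⟨hx, h2⟩; exact ⟨hx, (Finset.mem_Icc.mp (he hx)).1, h2⟩

lemma sdiff_nonempty_iff {m k : ℕ} {e : Finset ℕ} (he : e ⊆ Finset.Icc 1 m) :
    (e \ Finset.Icc 1 k).Nonempty ↔ k < e.sup id := by
  constructor
  · rintro ⟨x, hx⟩
    rw [Finset.mem_sdiff, Finset.mem_Icc] at hx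
    have h1 := (Finset.mem_Icc.mp (he hx.1)).1
    have : k < x := by omega
    exact lt_of_lt_of_le this (by simpa using Finset.le_sup (f := id) hx.1)
  · intro h
    have hne : e.Nonempty := by
      by_contra hc
      rw [Finset.not_nonempty_iff_eq_empty] at hc
      simp [hc] at h
    obtain ⟨x, hx, hx2⟩ := Finset.exists_mem_eq_sup e hne id
    simp only [id_eq] at hx2
    refine ⟨x, Finset.mem_sdiff.mpr ⟨hx, ?_⟩⟩
    rw [Finset.mem_Icc]
    omega

lemma sum_sockAt {r n : ℕ} (hr : 2 ≤ r) {M} (hM : IsRMatching r n M) :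
    ∑ k ∈ Finset.Icc 1 (r * n), sockAt k M + ∑ j ∈ Finset.Icc 1 (r * n), j
      = r * ∑ e ∈ M, e.sup id := by
  set m := r * n with hm
  have key : ∀ k ∈ Finset.Icc 1 m, sockAt k M =
      ∑ e ∈ M, ∑ x ∈ e, if x ≤ k ∧ k < e.sup id then 1 else 0 := by
    intro k hk
    rw [sockAt, Finset.sum_filter]
    refine Finset.sum_congr rfl (fun e he => ?_)
    have hes : e ⊆ Finset.Icc 1 m := block_subset hM he
    by_cases hb : k < e.sup id
    · by_cases hne : (e ∩ Finset.Icc 1 k).Nonempty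
      · rw [if_pos ⟨hne, (sdiff_nonempty_iff hes).mpr hb⟩, inter_eq_filter hes,
          Finset.card_filter]
        refine Finset.sum_congr rfl (fun x hx => ?_)
        by_cases hxk : x ≤ k
        · simp [hxk, hb]
        · simp [hxk]
      · rw [if_neg (fun hP => hne hP.1)]
        rw [inter_eq_filter hes, Finset.filter_nonempty_iff] at hne
        push_neg at hne
        symm
        refine Finset.sum_eq_zero (fun x hx => ?_)
        simp [hne x hx]
    · rw [if_neg (fun hP => hb ((sdiff_nonempty_iff hes).mp hP.2))]
      symm
      refine Finset.sum_eq_zero (fun x hx => ?_)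
      simp [hb]
  rw [Finset.sum_congr rfl key, Finset.sum_comm]
  have inner : ∀ e ∈ M, ∑ k ∈ Finset.Icc 1 m, ∑ x ∈ e, (if x ≤ k ∧ k < e.sup id then 1 else 0)
      = ∑ x ∈ e, (e.sup id - x) := by
    intro e he
    rw [Finset.sum_comm]
    refine Finset.sum_congr rfl (fun x hx => ?_)
    have hx1 : 1 ≤ x := (Finset.mem_Icc.mp (block_subset hM he hx)).1
    have hbm : e.sup id ≤ m := by
      apply Finset.sup_le
      intro y hy
      exact (Finset.mem_Icc.mp (block_subset hM he hy)).2
    have hxb : x ≤ e.sup id := by simpa using Finset.le_sup (f := id) hx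
    rw [← Finset.sum_filter, Finset.sum_const, smul_eq_mul, mul_one]
    have : (Finset.Icc 1 m).filter (fun k => x ≤ k ∧ k < e.sup id)
        = Finset.Icc x (e.sup id - 1) := by
      ext k
      simp only [Finset.mem_filter, Finset.mem_Icc]
      omega
    rw [this, Nat.card_Icc]
    omega
  rw [Finset.sum_congr rfl inner]
  have hsum : ∑ j ∈ Finset.Icc 1 m, j = ∑ e ∈ M, ∑ x ∈ e, x := by
    rw [← hM.2.2, Finset.sum_biUnion]
    · rfl
    · exact fun e he f hf hef => hM.2.1 e he f hf hef
  rw [hsum, ← Finset.sum_add_distrib, Finset.mul_sum]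
  refine Finset.sum_congr rfl (fun e he => ?_)
  rw [← Finset.sum_add_distrib]
  have : ∀ x ∈ e, e.sup id - x + x = e.sup id := by
    intro x hx
    have h5 : x ≤ e.sup id := by simpa using Finset.le_sup (f := id) hx
    omega
  rw [Finset.sum_congr rfl this, Finset.sum_const, smul_eq_mul, hM.1 e he]

lemma image_matching {r n : ℕ} (π : ℕ → ℕ)
    (hu : ∀ x ∈ Finset.Icc 1 (r * n), π x ∈ Finset.Icc 1 (r * n))
    (hinj : Set.InjOn π (Finset.Icc 1 (r * n))) {M} (hM : IsRMatching r n M) :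
    IsRMatching r n (M.image (Finset.image π)) := by
  set u := Finset.Icc 1 (r * n) with hu'
  have himgu : u.image π = u := by
    apply Finset.eq_of_subset_of_card_le
    · intro y hy
      obtain ⟨x, hx, rfl⟩ := Finset.mem_image.mp hy
      exact hu x hx
    · rw [Finset.card_image_of_injOn hinj]
  refine ⟨?_, ?_, ?_⟩
  · intro b' hb'
    obtain ⟨b, hb, rfl⟩ := Finset.mem_image.mp hb'
    rw [Finset.card_image_of_injOn (hinj.mono (Finset.coe_subset.mpr (block_subset hM hb)))]
    exact hM.1 b hb
  · intro b1' hb1' b2' hb2' hne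
    obtain ⟨b1, hb1, rfl⟩ := Finset.mem_image.mp hb1'
    obtain ⟨b2, hb2, rfl⟩ := Finset.mem_image.mp hb2'
    have hbne : b1 ≠ b2 := fun h => hne (by rw [h])
    have hdisj := hM.2.1 b1 hb1 b2 hb2 hbne
    rw [Finset.disjoint_left] at hdisj ⊢
    intro y hy1 hy2
    obtain ⟨x1, hx1, rfl⟩ := Finset.mem_image.mp hy1
    obtain ⟨x2, hx2, he⟩ := Finset.mem_image.mp hy2
    have : x2 = x1 := hinj (block_subset hM hb2 hx2) (block_subset hM hb1 hx1) he
    exact hdisj hx1 (this ▸ hx2)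
  · have h1 : (M.image (Finset.image π)).biUnion id = (M.biUnion id).image π := by
      ext y
      simp only [Finset.mem_biUnion, Finset.mem_image, id_eq]
      constructor
      · rintro ⟨b', ⟨b, hb, rfl⟩, hy⟩
        obtain ⟨x, hx, rfl⟩ := Finset.mem_image.mp hy
        exact ⟨x, ⟨b, hb, hx⟩, rfl⟩
      · rintro ⟨x, ⟨b, hb, hx⟩, rfl⟩
        exact ⟨b.image π, ⟨b, hb, rfl⟩, Finset.mem_image_of_mem _ hx⟩
    rw [h1, hM.2.2, himgu]

lemma count_const {r n : ℕ} {e f : Finset ℕ}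
    (he : e ∈ (Finset.Icc 1 (r * n)).powersetCard r)
    (hf : f ∈ (Finset.Icc 1 (r * n)).powersetCard r) :
    ((matchings r n).filter (fun M => e ∈ M)).card
      = ((matchings r n).filter (fun M => f ∈ M)).card := by
  set u := Finset.Icc 1 (r * n) with hu'
  obtain ⟨heu, hec⟩ := Finset.mem_powersetCard.mp he
  obtain ⟨hfu, hfc⟩ := Finset.mem_powersetCard.mp hf
  have hcard : e.card = f.card := by rw [hec, hfc]
  have hcard2 : (u \ e).card = (u \ f).card := by
    rw [Finset.card_sdiff_of_subset heu, Finset.card_sdiff_of_subset hfu, hec, hfc]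
  set α := Finset.equivOfCardEq hcard with hα
  set β := Finset.equivOfCardEq hcard2 with hβ
  set π : ℕ → ℕ := fun x =>
    if h : x ∈ e then (α ⟨x, h⟩ : ℕ)
    else if h2 : x ∈ u \ e then (β ⟨x, h2⟩ : ℕ) else x with hπ
  set ρ : ℕ → ℕ := fun y =>
    if h : y ∈ f then (α.symm ⟨y, h⟩ : ℕ)
    else if h2 : y ∈ u \ f then (β.symm ⟨y, h2⟩ : ℕ) else y with hρ
  have hπe : ∀ x (h : x ∈ e), π x = ((α ⟨x, h⟩ : f) : ℕ) := by
    intro x h; simp only [hπ]; rw [dif_pos h]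
  have hπd : ∀ x (h : x ∉ e) (h2 : x ∈ u \ e), π x = ((β ⟨x, h2⟩ : (u \ f : Finset ℕ)) : ℕ) := by
    intro x h h2; simp only [hπ]; rw [dif_neg h, dif_pos h2]
  have hρf : ∀ y (h : y ∈ f), ρ y = ((α.symm ⟨y, h⟩ : e) : ℕ) := by
    intro y h; simp only [hρ]; rw [dif_pos h]
  have hρd : ∀ y (h : y ∉ f) (h2 : y ∈ u \ f), ρ y = ((β.symm ⟨y, h2⟩ : (u \ e : Finset ℕ)) : ℕ) := by
    intro y h h2; simp only [hρ]; rw [dif_neg h, dif_pos h2]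
  have hρπ : ∀ x ∈ u, ρ (π x) = x := by
    intro x hx
    by_cases h : x ∈ e
    · rw [hπe x h]
      have hm : ((α ⟨x, h⟩ : f) : ℕ) ∈ f := (α ⟨x, h⟩).2
      rw [hρf _ hm]
      simp
    · have h2 : x ∈ u \ e := Finset.mem_sdiff.mpr ⟨hx, h⟩
      rw [hπd x h h2]
      have hm : ((β ⟨x, h2⟩ : (u \ f : Finset ℕ)) : ℕ) ∈ u \ f := (β ⟨x, h2⟩).2
      have hnf : ((β ⟨x, h2⟩ : (u \ f : Finset ℕ)) : ℕ) ∉ f := (Finset.mem_sdiff.mp hm).2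
      rw [hρd _ hnf hm]
      simp
  have hπρ : ∀ y ∈ u, π (ρ y) = y := by
    intro y hy
    by_cases h : y ∈ f
    · rw [hρf y h]
      have hm : ((α.symm ⟨y, h⟩ : e) : ℕ) ∈ e := (α.symm ⟨y, h⟩).2
      rw [hπe _ hm]
      simp
    · have h2 : y ∈ u \ f := Finset.mem_sdiff.mpr ⟨hy, h⟩
      rw [hρd y h h2]
      have hm : ((β.symm ⟨y, h2⟩ : (u \ e : Finset ℕ)) : ℕ) ∈ u \ e := (β.symm ⟨y, h2⟩).2
      have hne : ((β.symm ⟨y, h2⟩ : (u \ e : Finset ℕ)) : ℕ) ∉ e := (Finset.mem_sdiff.mp hm).2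
      rw [hπd _ hne hm]
      simp
  have hπu : ∀ x ∈ u, π x ∈ u := by
    intro x hx
    by_cases h : x ∈ e
    · rw [hπe x h]; exact hfu (α ⟨x, h⟩).2
    · have h2 : x ∈ u \ e := Finset.mem_sdiff.mpr ⟨hx, h⟩
      rw [hπd x h h2]; exact (Finset.mem_sdiff.mp (β ⟨x, h2⟩).2).1
  have hρu : ∀ y ∈ u, ρ y ∈ u := by
    intro y hy
    by_cases h : y ∈ f
    · rw [hρf y h]; exact heu (α.symm ⟨y, h⟩).2
    · have h2 : y ∈ u \ f := Finset.mem_sdiff.mpr ⟨hy, h⟩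
      rw [hρd y h h2]; exact (Finset.mem_sdiff.mp (β.symm ⟨y, h2⟩).2).1
  have hinjπ : Set.InjOn π u := by
    intro x1 h1 x2 h2 hpe
    have := congrArg ρ hpe
    rwa [hρπ x1 h1, hρπ x2 h2] at this
  have hinjρ : Set.InjOn ρ u := by
    intro x1 h1 x2 h2 hpe
    have := congrArg π hpe
    rwa [hπρ x1 h1, hπρ x2 h2] at this
  have himge : e.image π = f := by
    apply Finset.eq_of_subset_of_card_le
    · intro y hy
      obtain ⟨x, hx, rfl⟩ := Finset.mem_image.mp hy
      rw [hπe x hx]; exact (α ⟨x, hx⟩).2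
    · rw [Finset.card_image_of_injOn (hinjπ.mono (Finset.coe_subset.mpr heu)), hec, hfc]
  have himgf : f.image ρ = e := by
    apply Finset.eq_of_subset_of_card_le
    · intro y hy
      obtain ⟨x, hx, rfl⟩ := Finset.mem_image.mp hy
      rw [hρf x hx]; exact (α.symm ⟨x, hx⟩).2
    · rw [Finset.card_image_of_injOn (hinjρ.mono (Finset.coe_subset.mpr hfu)), hec, hfc]
  have hrestore : ∀ b : Finset ℕ, b ⊆ u → (b.image π).image ρ = b := by
    intro b hb
    rw [Finset.image_image]
    rw [show b.image (ρ ∘ π) = b.image id from Finset.image_congr (fun x hx => hρπ x (hb hx))]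
    exact Finset.image_id
  have hrestore2 : ∀ b : Finset ℕ, b ⊆ u → (b.image ρ).image π = b := by
    intro b hb
    rw [Finset.image_image]
    rw [show b.image (π ∘ ρ) = b.image id from Finset.image_congr (fun x hx => hπρ x (hb hx))]
    exact Finset.image_id
  refine Finset.card_bij' (fun M _ => M.image (Finset.image π))
    (fun M _ => M.image (Finset.image ρ)) ?_ ?_ ?_ ?_
  · intro M hM
    obtain ⟨hM1, hM2⟩ := Finset.mem_filter.mp hM
    refine Finset.mem_filter.mpr ⟨mem_matchings.mpr
      (image_matching π hπu hinjπ (mem_matchings.mp hM1)), ?_⟩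
    rw [← himge]
    exact Finset.mem_image_of_mem _ hM2
  · intro M hM
    obtain ⟨hM1, hM2⟩ := Finset.mem_filter.mp hM
    refine Finset.mem_filter.mpr ⟨mem_matchings.mpr
      (image_matching ρ hρu hinjρ (mem_matchings.mp hM1)), ?_⟩
    rw [← himgf]
    exact Finset.mem_image_of_mem _ hM2
  · intro M hM
    obtain ⟨hM1, _⟩ := Finset.mem_filter.mp hM
    have hMm := mem_matchings.mp hM1
    show (M.image (Finset.image π)).image (Finset.image ρ) = M
    rw [Finset.image_image]
    have : M.image (Finset.image ρ ∘ Finset.image π) = M.image id :=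
      Finset.image_congr (fun b hb => hrestore b (block_subset hMm hb))
    rw [this]; exact Finset.image_id
  · intro M hM
    obtain ⟨hM1, _⟩ := Finset.mem_filter.mp hM
    have hMm := mem_matchings.mp hM1
    show (M.image (Finset.image ρ)).image (Finset.image π) = M
    rw [Finset.image_image]
    have : M.image (Finset.image π ∘ Finset.image ρ) = M.image id :=
      Finset.image_congr (fun b hb => hrestore2 b (block_subset hMm hb))
    rw [this]; exact Finset.image_id

lemma filterP_eq {r n : ℕ} {M} (hM : IsRMatching r n M) :
    ((Finset.Icc 1 (r * n)).powersetCard r).filter (· ∈ M) = M := by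
  ext e
  simp only [Finset.mem_filter, Finset.mem_powersetCard]
  constructor
  · exact fun h => h.2
  · exact fun h => ⟨⟨block_subset hM h, hM.1 e h⟩, h⟩

lemma sum_over_matchings {r n : ℕ} (g : Finset ℕ → ℕ) :
    ∑ M ∈ matchings r n, ∑ e ∈ M, g e
      = ∑ e ∈ (Finset.Icc 1 (r * n)).powersetCard r,
          ((matchings r n).filter (fun M => e ∈ M)).card * g e := by
  have h1 : ∀ M ∈ matchings r n, ∑ e ∈ M, g e
      = ∑ e ∈ (Finset.Icc 1 (r * n)).powersetCard r, if e ∈ M then g e else 0 := by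
    intro M hM
    rw [← Finset.sum_filter, filterP_eq (mem_matchings.mp hM)]
  rw [Finset.sum_congr rfl h1, Finset.sum_comm]
  refine Finset.sum_congr rfl (fun e _ => ?_)
  rw [← Finset.sum_filter, Finset.sum_const, smul_eq_mul]

lemma sum_range_choose_eq (m r : ℕ) :
    ∑ k ∈ Finset.range m, Nat.choose k r = Nat.choose m (r + 1) := by
  induction m with
  | zero => simp
  | succ m ih => rw [Finset.sum_range_succ, ih, Nat.choose_succ_succ' m r]; ring

lemma gauss_sum (m : ℕ) : 2 * ∑ j ∈ Finset.Icc 1 m, j = m * (m + 1) := by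
  induction m with
  | zero => simp
  | succ m ih =>
    rw [Finset.sum_Icc_succ_top (by omega), Nat.mul_add, ih]
    ring

lemma filter_sup_le (m r k : ℕ) (hk : k ≤ m) :
    ((Finset.Icc 1 m).powersetCard r).filter (fun e => e.sup id ≤ k)
      = (Finset.Icc 1 k).powersetCard r := by
  ext e
  simp only [Finset.mem_filter, Finset.mem_powersetCard]
  constructor
  · rintro ⟨⟨hsub, hc⟩, hsup⟩
    refine ⟨fun x hx => ?_, hc⟩
    have h1 := Finset.mem_Icc.mp (hsub hx)
    have h2 : x ≤ e.sup id := by simpa using Finset.le_sup (f := id) hx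
    exact Finset.mem_Icc.mpr ⟨h1.1, le_trans h2 hsup⟩
  · rintro ⟨hsub, hc⟩
    refine ⟨⟨fun x hx => ?_, hc⟩, ?_⟩
    · have h1 := Finset.mem_Icc.mp (hsub hx)
      exact Finset.mem_Icc.mpr ⟨h1.1, le_trans h1.2 hk⟩
    · exact Finset.sup_le (fun x hx => (Finset.mem_Icc.mp (hsub hx)).2)

lemma sum_sup (m r : ℕ) :
    ∑ e ∈ (Finset.Icc 1 m).powersetCard r, e.sup id
        + ∑ k ∈ Finset.range m, Nat.choose k r
      = m * Nat.choose m r := by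
  set P := (Finset.Icc 1 m).powersetCard r with hP
  have hsupm : ∀ e ∈ P, e.sup id ≤ m := by
    intro e he
    obtain ⟨hsub, _⟩ := Finset.mem_powersetCard.mp he
    exact Finset.sup_le (fun x hx => (Finset.mem_Icc.mp (hsub hx)).2)
  have h1 : ∀ e ∈ P, e.sup id = ∑ k ∈ Finset.range m, if k < e.sup id then 1 else 0 := by
    intro e he
    rw [← Finset.sum_filter, Finset.sum_const, smul_eq_mul, mul_one]
    have : (Finset.range m).filter (fun k => k < e.sup id) = Finset.range (e.sup id) := by
      ext k
      simp only [Finset.mem_filter, Finset.mem_range]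
      have := hsupm e he
      omega
    rw [this, Finset.card_range]
  rw [Finset.sum_congr rfl h1, Finset.sum_comm]
  have h2 : ∀ k ∈ Finset.range m,
      (∑ e ∈ P, if k < e.sup id then 1 else 0) + Nat.choose k r = Nat.choose m r := by
    intro k hk
    have hkm : k ≤ m := le_of_lt (Finset.mem_range.mp hk)
    have ha : ∑ e ∈ P, (if k < e.sup id then 1 else 0)
        = (P.filter (fun e => k < e.sup id)).card := by
      rw [← Finset.sum_filter, Finset.sum_const, smul_eq_mul, mul_one]
    have hb : (P.filter (fun e => ¬ k < e.sup id)).card = Nat.choose k r := by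
      have : P.filter (fun e => ¬ k < e.sup id) = P.filter (fun e => e.sup id ≤ k) := by
        apply Finset.filter_congr
        intro e _
        simp [Nat.not_lt]
      rw [this, hP, filter_sup_le m r k hkm, Finset.card_powersetCard, Nat.card_Icc]
      simp
    have hc : (P.filter (fun e => k < e.sup id)).card
        + (P.filter (fun e => ¬ k < e.sup id)).card = P.card :=
      Finset.card_filter_add_card_filter_not _
    have hPcard : P.card = Nat.choose m r := by
      rw [hP, Finset.card_powersetCard, Nat.card_Icc]
      simp
    omega
  calc ∑ k ∈ Finset.range m, ∑ e ∈ P, (if k < e.sup id then 1 else 0)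
        + ∑ k ∈ Finset.range m, Nat.choose k r
      = ∑ k ∈ Finset.range m, ((∑ e ∈ P, if k < e.sup id then 1 else 0) + Nat.choose k r) := by
        rw [Finset.sum_add_distrib]
    _ = ∑ k ∈ Finset.range m, Nat.choose m r := Finset.sum_congr rfl h2
    _ = m * Nat.choose m r := by rw [Finset.sum_const, Finset.card_range, smul_eq_mul]

lemma matchings_nonempty (r n : ℕ) (hr : 1 ≤ r) : (matchings r n).Nonempty := by
  refine ⟨(Finset.range n).image (fun i => Finset.Icc (r * i + 1) (r * i + r)), ?_⟩
  have hblock : ∀ i, (Finset.Icc (r * i + 1) (r * i + r)).card = r := by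
    intro i; rw [Nat.card_Icc]; omega
  have hmem : IsRMatching r n ((Finset.range n).image (fun i => Finset.Icc (r * i + 1) (r * i + r))) := by
    refine ⟨?_, ?_, ?_⟩
    · intro e he
      obtain ⟨i, _, rfl⟩ := Finset.mem_image.mp he
      exact hblock i
    · intro e he f hf hne
      obtain ⟨i, _, rfl⟩ := Finset.mem_image.mp he
      obtain ⟨j, _, rfl⟩ := Finset.mem_image.mp hf
      have hij : i ≠ j := fun h => hne (by rw [h])
      rw [Finset.disjoint_left]
      intro x hx1 hx2
      rw [Finset.mem_Icc] at hx1 hx2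
      rcases Nat.lt_or_ge i j with h | h
      · have h1 : r * (i + 1) ≤ r * j := Nat.mul_le_mul_left r h
        have h2 : r * (i + 1) = r * i + r := by ring
        omega
      · have hj : j < i := by omega
        have h1 : r * (j + 1) ≤ r * i := Nat.mul_le_mul_left r hj
        have h2 : r * (j + 1) = r * j + r := by ring
        omega
    · ext x
      simp only [Finset.mem_biUnion, Finset.mem_image, id_eq, Finset.mem_Icc]
      constructor
      · rintro ⟨b, ⟨i, hi, rfl⟩, hx⟩
        rw [Finset.mem_Icc] at hx
        have hin : i < n := Finset.mem_range.mp hi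
        have h1 : r * (i + 1) ≤ r * n := Nat.mul_le_mul_left r hin
        have h2 : r * (i + 1) = r * i + r := by ring
        omega
      · rintro ⟨hx1, hx2⟩
        refine ⟨Finset.Icc (r * ((x - 1) / r) + 1) (r * ((x - 1) / r) + r),
          ⟨(x - 1) / r, ?_, rfl⟩, ?_⟩
        · rw [Finset.mem_range]
          rw [Nat.div_lt_iff_lt_mul (by omega)]
          have : n * r = r * n := Nat.mul_comm n r
          omega
        · rw [Finset.mem_Icc]
          have h1 : r * ((x - 1) / r) ≤ x - 1 := Nat.mul_div_le (x - 1) r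
          have h2 : x - 1 < r * ((x - 1) / r) + r := by
            have h3 : x - 1 < (x - 1) / r * r + r := Nat.lt_div_mul_add (by omega)
            have h4 : (x - 1) / r * r = r * ((x - 1) / r) := by ring
            omega
          omega
  exact Finset.mem_filter.mpr ⟨by
    rw [Finset.mem_powerset]
    intro b hb
    rw [Finset.mem_powerset]
    intro x hx
    rw [← hmem.2.2]
    exact Finset.mem_biUnion.mpr ⟨b, hb, hx⟩, hmem⟩


theorem stmt9 (r n : ℕ) (hr : 2 ≤ r) (hn : 1 ≤ n) :
    (∑ M ∈ matchings r n,
        (∑ k ∈ Finset.Icc 1 (r * n), (sockAt k M : ℚ)) / (r * n)) /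
        (matchings r n).card =
      ((r : ℚ) - 1) * (r * n + 1) / (2 * (r + 1)) := by
  set m := r * n with hm
  set S := matchings r n with hS
  set P := (Finset.Icc 1 m).powersetCard r with hPdef
  have hm2 : 2 * 1 ≤ r * n := Nat.mul_le_mul hr hn
  have hm1 : 1 ≤ m := by omega
  have hrm : r ≤ m := by
    have := Nat.mul_le_mul_left r hn
    omega
  have hCpos : 0 < S.card := Finset.Nonempty.card_pos (matchings_nonempty r n (by omega))
  have he0 : Finset.Icc 1 r ∈ P := by
    refine Finset.mem_powersetCard.mpr ⟨?_, ?_⟩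
    · exact Finset.Icc_subset_Icc le_rfl hrm
    · rw [Nat.card_Icc]; omega
  set N0 := (S.filter (fun M => Finset.Icc 1 r ∈ M)).card with hN0
  have hconst : ∀ e ∈ P, (S.filter (fun M => e ∈ M)).card = N0 :=
    fun e he => count_const he he0
  have hB1 : ∑ e ∈ P, (S.filter (fun M => e ∈ M)).card = n * S.card := by
    have hsom := sum_over_matchings (r := r) (n := n) (fun _ => 1)
    simp only [mul_one] at hsom
    rw [← hsom]
    have h1 : ∀ M ∈ S, ∑ _e ∈ M, (1 : ℕ) = n := by
      intro M hM
      rw [Finset.sum_const, smul_eq_mul, mul_one,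
        card_blocks (by omega) (mem_matchings.mp hM)]
    rw [Finset.sum_congr rfl h1, Finset.sum_const, smul_eq_mul, mul_comm]
  have hB1' : N0 * Nat.choose m r = n * S.card := by
    have hPcard : P.card = Nat.choose m r := by
      rw [hPdef, Finset.card_powersetCard, Nat.card_Icc]
      simp
    rw [← hPcard, ← hB1, Finset.sum_congr rfl hconst, Finset.sum_const, smul_eq_mul, mul_comm]
  have hB2 : ∑ M ∈ S, ∑ e ∈ M, e.sup id = N0 * ∑ e ∈ P, e.sup id := by
    rw [sum_over_matchings (fun e => e.sup id), Finset.mul_sum]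
    exact Finset.sum_congr rfl (fun e he => by rw [hconst e he])
  have hA : (∑ M ∈ S, ∑ k ∈ Finset.Icc 1 m, sockAt k M)
      + S.card * (∑ j ∈ Finset.Icc 1 m, j)
      = r * (N0 * ∑ e ∈ P, e.sup id) := by
    have h2 : ∑ M ∈ S, ((∑ k ∈ Finset.Icc 1 m, sockAt k M) + (∑ j ∈ Finset.Icc 1 m, j))
        = ∑ M ∈ S, r * ∑ e ∈ M, e.sup id :=
      Finset.sum_congr rfl (fun M hM => sum_sockAt hr (mem_matchings.mp hM))
    rw [Finset.sum_add_distrib, Finset.sum_const, smul_eq_mul, ← Finset.mul_sum, hB2] at h2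
    exact h2
  have hC : (∑ e ∈ P, e.sup id) + Nat.choose m (r + 1) = m * Nat.choose m r := by
    have := sum_sup m r
    rwa [sum_range_choose_eq] at this
  have hD := Nat.choose_succ_right_eq m r
  have hE := gauss_sum m
  have hKpos : 0 < Nat.choose m r := Nat.choose_pos hrm
  -- move to ℚ
  have hmq : ((m : ℕ) : ℚ) = (r : ℚ) * n := by rw [hm]; push_cast; ring
  have qA := congrArg (fun x : ℕ => (x : ℚ)) hA
  have qB := congrArg (fun x : ℕ => (x : ℚ)) hB1'
  have qC := congrArg (fun x : ℕ => (x : ℚ)) hC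
  have qD := congrArg (fun x : ℕ => (x : ℚ)) hD
  have qE := congrArg (fun x : ℕ => (x : ℚ)) hE
  simp only [Nat.cast_mul, Nat.cast_add, Nat.cast_sum, Nat.cast_ofNat, Nat.cast_one] at qA qB qC qD qE
  rw [Nat.cast_sub hrm] at qD
  have hcne : ((S.card : ℚ)) ≠ 0 := by exact_mod_cast hCpos.ne'
  have hmne : ((m : ℕ) : ℚ) ≠ 0 := Nat.cast_ne_zero.mpr (by omega)
  rw [← Finset.sum_div, div_div, ← hmq,
    div_eq_div_iff (mul_ne_zero hmne hcne) (by positivity)]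
  linear_combination (2*((r:ℚ)+1))*qA + (2*(r:ℚ)*((r:ℚ)+1)*(N0:ℚ))*qC
    - (2*(r:ℚ)*(N0:ℚ))*qD + (2*(r:ℚ)*((r:ℚ)*(m:ℚ)+(r:ℚ)))*qB
    - (((r:ℚ)+1)*(S.card:ℚ))*qE - (2*(r:ℚ)*(S.card:ℚ)*((m:ℚ)+1))*hmq
end

section
/- For n ≥ 1, the number of matchings on [2n] with sock number exactly n−1 equals (n−1)^2·(n−1)!. -/
open Finset
open scoped Classical

/-!
At a cut `k` where the maximum `n - 1` of `crossAt k M` is attained, exactly one edge `e` does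
not cross; counting the vertices left of the cut shows that the cut is `n - 1` with `e` to its
right, or `n + 1` with `e` to its left, and the other edges form a bijection between the two
sides. Conversely, such a matching has sock number `n - 1` as soon as no cut is crossed by all
edges. Choosing the cut `n - 1` when both occur, the matchings of sock number `n - 1` are an edge
`e ⊆ [n+1, 2n]` with a bijection `[1, n-1] → [n, 2n] \ e`, or an edge `e ⊆ [1, n-1]` with a
bijection `[1, n+1] \ e → [n+2, 2n]`. Each `e` gives `(n-1)!` matchings, and
`C(n, 2) + C(n-1, 2) = (n-1)^2`.
-/

section Partition

variable {α : Type*} [DecidableEq α]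

def IsPartitionOf (M : Finset (Finset α)) (U : Finset α) : Prop :=
  (∀ e ∈ M, ∀ f ∈ M, e ≠ f → Disjoint e f) ∧ M.biUnion id = U

namespace IsPartitionOf

variable {M : Finset (Finset α)} {U : Finset α} {e f : Finset α}

lemma subset_of_mem (hM : IsPartitionOf M U) (he : e ∈ M) : e ⊆ U :=
  hM.2 ▸ subset_biUnion_of_mem id he

lemma exists_mem (hM : IsPartitionOf M U) {x : α} (hx : x ∈ U) : ∃ e ∈ M, x ∈ e := by
  simpa [← hM.2] using hx

lemma eq_of_mem_of_mem (hM : IsPartitionOf M U) (he : e ∈ M) (hf : f ∈ M) {x : α}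
    (hxe : x ∈ e) (hxf : x ∈ f) : e = f := by
  by_contra h
  exact disjoint_left.1 (hM.1 e he f hf h) hxe hxf

lemma erase (hM : IsPartitionOf M U) (he : e ∈ M) : IsPartitionOf (M.erase e) (U \ e) := by
  refine ⟨fun f hf g hg => hM.1 f (mem_of_mem_erase hf) g (mem_of_mem_erase hg), ?_⟩
  ext x
  simp only [mem_biUnion, mem_erase, id, mem_sdiff]
  constructor
  · rintro ⟨f, ⟨hfe, hf⟩, hxf⟩
    exact ⟨hM.subset_of_mem hf hxf, fun hxe => hfe (hM.eq_of_mem_of_mem hf he hxf hxe)⟩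
  · rintro ⟨hx, hxe⟩
    obtain ⟨f, hf, hxf⟩ := hM.exists_mem hx
    exact ⟨f, ⟨by rintro rfl; exact hxe hxf, hf⟩, hxf⟩

lemma insert (hM : IsPartitionOf M U) (he : Disjoint e U) :
    IsPartitionOf (insert e M) (e ∪ U) := by
  refine ⟨?_, by rw [biUnion_insert, hM.2, id]⟩
  have hdisj : ∀ f ∈ M, Disjoint e f := fun f hf => he.mono_right (hM.subset_of_mem hf)
  intro f hf g hg hfg
  rcases mem_insert.1 hf with rfl | hfM
  · exact hdisj g ((mem_insert.1 hg).resolve_left hfg.symm)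
  rcases mem_insert.1 hg with rfl | hgM
  · exact (hdisj f hfM).symm
  · exact hM.1 f hfM g hgM hfg

lemma card_inter (hM : IsPartitionOf M U) (S : Finset α) :
    (U ∩ S).card = ∑ f ∈ M, (f ∩ S).card := by
  rw [← card_biUnion fun f hf g hg hfg =>
      (hM.1 f hf g hg hfg).mono inter_subset_left inter_subset_left,
    ← hM.2, biUnion_inter]
  rfl

end IsPartitionOf

def IsPairing (L R : Finset α) (M : Finset (Finset α)) : Prop :=
  (∀ e ∈ M, ∃ a ∈ L, ∃ b ∈ R, e = {a, b}) ∧ IsPartitionOf M (L ∪ R)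

noncomputable def pairings (L R : Finset α) : Finset (Finset (Finset α)) :=
  (L ∪ R).powerset.powerset.filter (IsPairing L R)

variable {L R : Finset α} {M : Finset (Finset α)} {a b : α} {e : Finset α}

lemma mem_pairings : M ∈ pairings L R ↔ IsPairing L R M := by
  refine ⟨fun h => (mem_filter.1 h).2, fun h => mem_filter.2 ⟨?_, h⟩⟩
  exact mem_powerset.2 fun e he => mem_powerset.2 (h.2.subset_of_mem he)

lemma IsPairing.notMem_of_disjoint (hM : IsPairing L R M) (he : Disjoint L e) : e ∉ M := by
  intro hem
  obtain ⟨a, ha, b, -, rfl⟩ := hM.1 e hem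
  exact disjoint_left.1 he ha (mem_insert_self a {b})

lemma IsPairing.erase_pair (hM : IsPairing L R M) (hLR : Disjoint L R) (ha : a ∈ L)
    (hb : b ∈ R) (hab : {a, b} ∈ M) : IsPairing (L.erase a) (R.erase b) (M.erase {a, b}) := by
  refine ⟨fun f hf => ?_, ?_⟩
  · obtain ⟨hfab, hf⟩ := mem_erase.1 hf
    obtain ⟨c, hc, d, hd, rfl⟩ := hM.1 f hf
    have hdisj := hM.2.1 _ hf _ hab hfab
    simp only [disjoint_insert_left, disjoint_insert_right, disjoint_singleton_left,
      mem_insert, mem_singleton] at hdisj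
    exact ⟨c, mem_erase.2 ⟨by tauto, hc⟩, d, mem_erase.2 ⟨by tauto, hd⟩, rfl⟩
  · convert hM.2.erase hab using 1
    ext x
    have := disjoint_left.1 hLR
    simp only [mem_union, mem_erase, mem_sdiff, mem_insert, mem_singleton]
    grind

lemma IsPairing.insert_pair (hM : IsPairing (L.erase a) (R.erase b) M) (hLR : Disjoint L R)
    (ha : a ∈ L) (hb : b ∈ R) : IsPairing L R (insert {a, b} M) := by
  refine ⟨fun f hf => ?_, ?_⟩
  · rcases mem_insert.1 hf with rfl | hf
    · exact ⟨a, ha, b, hb, rfl⟩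
    · obtain ⟨c, hc, d, hd, rfl⟩ := hM.1 f hf
      exact ⟨c, mem_of_mem_erase hc, d, mem_of_mem_erase hd, rfl⟩
  · have := disjoint_left.1 hLR
    convert hM.2.insert ?_ using 1
    · ext x
      simp only [mem_union, mem_erase, mem_insert, mem_singleton]
      grind
    · simp only [disjoint_left, mem_union, mem_erase, mem_insert, mem_singleton]
      grind

lemma disjoint_erase_pair (hLR : Disjoint L R) (hb : b ∈ R) : Disjoint (L.erase a) {a, b} := by
  simp only [disjoint_left, mem_erase, mem_insert, mem_singleton]
  rintro x ⟨hxa, hx⟩ (rfl | rfl)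
  exacts [hxa rfl, disjoint_left.1 hLR hx hb]

lemma card_image_insert_pairings (he : Disjoint L e) :
    ((pairings L R).image (insert e)).card = (pairings L R).card := by
  refine card_image_of_injOn fun M₁ h₁ M₂ h₂ h => ?_
  have hnot : ∀ M ∈ pairings L R, e ∉ M := fun M hM =>
    (mem_pairings.1 hM).notMem_of_disjoint he
  rw [← erase_insert (hnot M₁ h₁), ← erase_insert (hnot M₂ h₂)]
  exact congrArg (·.erase e) h

lemma pairings_eq_biUnion (hLR : Disjoint L R) (ha : a ∈ L) :
    pairings L R =
      R.biUnion fun b => (pairings (L.erase a) (R.erase b)).image (insert {a, b}) := by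
  ext M
  simp only [mem_biUnion, mem_image, mem_pairings]
  constructor
  · intro hM
    obtain ⟨f, hf, haf⟩ := hM.2.exists_mem (mem_union_left R ha)
    obtain ⟨a', ha', b, hb, rfl⟩ := hM.1 f hf
    obtain rfl : a = a' := by
      rcases mem_insert.1 haf with h | h
      · exact h
      · exact absurd (mem_singleton.1 h ▸ hb) (disjoint_left.1 hLR ha)
    exact ⟨b, hb, M.erase {a, b}, hM.erase_pair hLR ha hb hf, insert_erase hf⟩
  · rintro ⟨b, hb, M, hM, rfl⟩
    exact hM.insert_pair hLR ha hb

lemma card_pairings (hLR : Disjoint L R) {m : ℕ} (hL : L.card = m) (hR : R.card = m) :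
    (pairings L R).card = m.factorial := by
  induction m generalizing L R with
  | zero =>
    obtain rfl := card_eq_zero.1 hL
    obtain rfl := card_eq_zero.1 hR
    have : pairings (∅ : Finset α) ∅ = {∅} := by
      ext M
      rw [mem_pairings, mem_singleton]
      refine ⟨fun hM => eq_empty_of_forall_notMem fun f hf => ?_, fun h => ?_⟩
      · obtain ⟨a, ha, -⟩ := hM.1 f hf
        exact notMem_empty a ha
      · subst h
        exact ⟨by simp, by simp [IsPartitionOf]⟩
    simp [this]
  | succ m ih =>
    obtain ⟨a, ha⟩ := card_pos.1 (show 0 < L.card by omega)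
    have hLa : (L.erase a).card = m := by rw [card_erase_of_mem ha, hL]; rfl
    rw [pairings_eq_biUnion hLR ha, card_biUnion, sum_congr rfl fun b hb => by
      rw [card_image_insert_pairings (disjoint_erase_pair hLR hb),
        ih (hLR.mono (erase_subset a L) (erase_subset b R)) hLa
          (by rw [card_erase_of_mem hb, hR]; rfl)],
      sum_const, hR, smul_eq_mul, Nat.factorial_succ]
    intro b hb b' hb' hbb'
    simp only [Function.onFun, disjoint_left, mem_image]
    rintro M ⟨M₁, hM₁, rfl⟩ ⟨M₂, hM₂, h⟩
    have hab' : ({a, b'} : Finset α) ∈ M₁ := by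
      have : ({a, b'} : Finset α) ∈ insert {a, b} M₁ := h ▸ mem_insert_self _ _
      refine (mem_insert.1 this).resolve_left fun h' => hbb' ?_
      have : b' ∈ ({a, b} : Finset α) := h' ▸ mem_insert_of_mem (mem_singleton_self b')
      rcases mem_insert.1 this with h'' | h''
      · exact absurd (h'' ▸ hb') (disjoint_left.1 hLR ha)
      · exact (mem_singleton.1 h'').symm
    exact (mem_pairings.1 hM₁).notMem_of_disjoint (disjoint_erase_pair hLR hb') hab'

end Partition

lemma Icc_sdiff_eq_union {k m : ℕ} (hk : k ≤ m) (e : Finset ℕ) :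
    Icc 1 m \ e = (Icc 1 k \ e) ∪ (Ioc k m \ e) := by
  rw [← union_sdiff_distrib]
  congr 1
  ext x
  simp only [mem_Icc, mem_union, mem_Ioc]
  omega

lemma pair_mem_powersetCard_Icc {a b c d : ℕ} (hab : a < b) (hca : c ≤ a) (hbd : b ≤ d) :
    ({a, b} : Finset ℕ) ∈ (Icc c d).powersetCard 2 := by
  rw [mem_powersetCard, card_pair hab.ne]
  refine ⟨fun x hx => ?_, rfl⟩
  rcases mem_insert.1 hx with rfl | hx
  · exact mem_Icc.2 ⟨hca, by omega⟩
  · exact mem_Icc.2 (mem_singleton.1 hx ▸ ⟨by omega, hbd⟩)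

def Crosses (k : ℕ) (e : Finset ℕ) : Prop :=
  (e ∩ Icc 1 k).Nonempty ∧ (e \ Icc 1 k).Nonempty

def CrossesExcept (k : ℕ) (e : Finset ℕ) (M : Finset (Finset ℕ)) : Prop :=
  e ∈ M ∧ ∀ f ∈ M, f ≠ e → Crosses k f

section Crossing

variable {n k : ℕ} {M : Finset (Finset ℕ)} {e f : Finset ℕ}

lemma crossAt_eq_card_filter : crossAt k M = (M.filter (Crosses k)).card := by
  unfold crossAt Crosses
  congr

lemma crosses_pair_iff {a b : ℕ} (ha : 1 ≤ a) (hab : a < b) :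
    Crosses k {a, b} ↔ a ≤ k ∧ k < b := by
  simp only [Crosses, Finset.Nonempty, mem_inter, mem_sdiff, mem_insert, mem_singleton, mem_Icc]
  constructor
  · rintro ⟨⟨x, hx, hx1, hxk⟩, ⟨y, hy, hy'⟩⟩
    omega
  · rintro ⟨hak, hkb⟩
    exact ⟨⟨a, Or.inl rfl, ha, hak⟩, ⟨b, Or.inr rfl, by omega⟩⟩

lemma not_crosses_iff : ¬Crosses k e ↔ Disjoint e (Icc 1 k) ∨ e ⊆ Icc 1 k := by
  rw [Crosses, not_and_or, not_nonempty_iff_eq_empty, not_nonempty_iff_eq_empty,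
    sdiff_eq_empty_iff_subset, ← disjoint_iff_inter_eq_empty]

lemma Crosses.card_inter_eq_one (h : Crosses k e) (he : e.card = 2) :
    (e ∩ Icc 1 k).card = 1 := by
  obtain ⟨x, hx⟩ := h.2
  have hlt : (e ∩ Icc 1 k).card < e.card :=
    card_lt_card ⟨inter_subset_left, fun hsub =>
      (mem_sdiff.1 hx).2 (mem_inter.1 (hsub (mem_sdiff.1 hx).1)).2⟩
  have := card_pos.2 h.1
  omega

lemma crossAt_lt_card (hf : f ∈ M) (h : ¬Crosses k f) : crossAt k M < M.card := by
  rw [crossAt_eq_card_filter]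
  exact card_lt_card (filter_ssubset.2 ⟨f, hf, h⟩)

lemma crossAt_eq_card (h : ∀ f ∈ M, Crosses k f) : crossAt k M = M.card := by
  rw [crossAt_eq_card_filter, filter_true_of_mem h]

lemma CrossesExcept.card_erase_le_crossAt (h : CrossesExcept k e M) :
    (M.erase e).card ≤ crossAt k M := by
  rw [crossAt_eq_card_filter]
  exact card_le_card fun f hf =>
    mem_filter.2 ⟨mem_of_mem_erase hf, h.2 f (mem_of_mem_erase hf) (ne_of_mem_erase hf)⟩

lemma exists_crossesExcept_of_crossAt_add_one (h : crossAt k M + 1 = M.card) :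
    ∃ e, CrossesExcept k e M ∧ ¬Crosses k e := by
  have hsplit := card_filter_add_card_filter_not (s := M) (Crosses k)
  rw [crossAt_eq_card_filter] at h
  obtain ⟨e, he⟩ := card_eq_one.1 (show (M.filter (¬Crosses k ·)).card = 1 by omega)
  have hmem : ∀ f, f ∈ M ∧ ¬Crosses k f ↔ f = e := fun f => by
    simpa only [mem_filter, mem_singleton] using Iff.of_eq (congrArg (f ∈ ·) he)
  obtain ⟨heM, hnc⟩ := (hmem e).2 rfl
  exact ⟨e, ⟨heM, fun f hf hfe => by_contra fun hc => hfe ((hmem f).1 ⟨hf, hc⟩)⟩, hnc⟩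

end Crossing

namespace IsRMatching

variable {r n k : ℕ} {M : Finset (Finset ℕ)} {e f : Finset ℕ}

lemma isPartitionOf (hM : IsRMatching r n M) : IsPartitionOf M (Icc 1 (r * n)) := hM.2

lemma card_eq (hr : 0 < r) (hM : IsRMatching r n M) : M.card = n := by
  have := hM.isPartitionOf.card_inter (Icc 1 (r * n))
  rw [inter_self, Nat.card_Icc, sum_congr rfl fun f hf => by
    rw [inter_eq_left.2 (hM.isPartitionOf.subset_of_mem hf), hM.1 f hf], sum_const,
    smul_eq_mul, Nat.add_sub_cancel] at this
  exact Nat.eq_of_mul_eq_mul_left hr (by linarith)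

lemma exists_eq_pair (hM : IsRMatching 2 n M) (hf : f ∈ M) :
    ∃ a b, 1 ≤ a ∧ a < b ∧ b ≤ 2 * n ∧ f = {a, b} := by
  obtain ⟨a, b, hab, rfl⟩ := card_eq_two.1 (hM.1 f hf)
  have ha := mem_Icc.1 (hM.isPartitionOf.subset_of_mem hf (mem_insert_self a {b}))
  have hb := mem_Icc.1
    (hM.isPartitionOf.subset_of_mem hf (mem_insert_of_mem (mem_singleton_self b)))
  rcases lt_or_gt_of_ne hab with h | h
  · exact ⟨a, b, ha.1, h, hb.2, rfl⟩
  · exact ⟨b, a, hb.1, h, ha.2, pair_comm a b⟩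

lemma notMem_of_ne (hM : IsRMatching r n M) (he : e ∈ M) (hf : f ∈ M) (hfe : f ≠ e) {x : ℕ}
    (hx : x ∈ e) : x ∉ f :=
  fun hxf => hfe (hM.isPartitionOf.eq_of_mem_of_mem hf he hxf hx)

lemma exists_eq_crossing_pair (hM : IsRMatching 2 n M) (h : CrossesExcept k e M)
    (hf : f ∈ M) (hfe : f ≠ e) :
    ∃ a b, 1 ≤ a ∧ a ≤ k ∧ k < b ∧ b ≤ 2 * n ∧ a ∉ e ∧ b ∉ e ∧ f = {a, b} := by
  obtain ⟨a, b, ha, hab, hb, rfl⟩ := hM.exists_eq_pair hf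
  have hcross := (crosses_pair_iff ha hab).1 (h.2 _ hf hfe)
  refine ⟨a, b, ha, hcross.1, hcross.2, hb, fun hae => ?_, fun hbe => ?_, rfl⟩
  · exact hM.notMem_of_ne h.1 hf hfe hae (mem_insert_self a {b})
  · exact hM.notMem_of_ne h.1 hf hfe hbe (mem_insert_of_mem (mem_singleton_self b))

end IsRMatching

noncomputable def matchingsCrossingExcept (n k : ℕ) (e : Finset ℕ) :
    Finset (Finset (Finset ℕ)) :=
  (matchings 2 n).filter (CrossesExcept k e)

section CrossingExcept

variable {n k : ℕ} {M : Finset (Finset ℕ)} {e : Finset ℕ}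

lemma IsRMatching.isPairing_erase (hM : IsRMatching 2 n M) (h : CrossesExcept k e M)
    (hk : k ≤ 2 * n) : IsPairing (Icc 1 k \ e) (Ioc k (2 * n) \ e) (M.erase e) := by
  refine ⟨fun f hf => ?_, Icc_sdiff_eq_union hk e ▸ hM.isPartitionOf.erase h.1⟩
  obtain ⟨a, b, ha, hak, hkb, hb, hae, hbe, rfl⟩ :=
    hM.exists_eq_crossing_pair h (mem_of_mem_erase hf) (ne_of_mem_erase hf)
  exact ⟨a, mem_sdiff.2 ⟨mem_Icc.2 ⟨ha, hak⟩, hae⟩, b, mem_sdiff.2 ⟨mem_Ioc.2 ⟨hkb, hb⟩, hbe⟩,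
    rfl⟩

lemma IsPairing.isRMatching_insert (hM : IsPairing (Icc 1 k \ e) (Ioc k (2 * n) \ e) M)
    (he : e ⊆ Icc 1 (2 * n)) (he2 : e.card = 2) (hk : k ≤ 2 * n) :
    IsRMatching 2 n (insert e M) := by
  refine ⟨fun f hf => ?_, ?_⟩
  · rcases mem_insert.1 hf with rfl | hf
    · exact he2
    · obtain ⟨a, ha, b, hb, rfl⟩ := hM.1 f hf
      simp only [mem_sdiff, mem_Icc, mem_Ioc] at ha hb
      exact card_pair (by omega)
  · have := hM.2.insert (Icc_sdiff_eq_union hk e ▸ disjoint_sdiff)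
    rwa [← Icc_sdiff_eq_union hk, union_sdiff_of_subset he] at this

lemma IsPairing.crossesExcept_insert (hM : IsPairing (Icc 1 k \ e) (Ioc k (2 * n) \ e) M) :
    CrossesExcept k e (insert e M) := by
  refine ⟨mem_insert_self e M, fun f hf hfe => ?_⟩
  obtain ⟨a, ha, b, hb, rfl⟩ := hM.1 f ((mem_insert.1 hf).resolve_left hfe)
  simp only [mem_sdiff, mem_Icc, mem_Ioc] at ha hb
  exact (crosses_pair_iff ha.1.1 (by omega)).2 ⟨ha.1.2, hb.1.1⟩

lemma matchingsCrossingExcept_eq_image (he : e ⊆ Icc 1 (2 * n)) (he2 : e.card = 2)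
    (hk : k ≤ 2 * n) : matchingsCrossingExcept n k e =
      (pairings (Icc 1 k \ e) (Ioc k (2 * n) \ e)).image (insert e) := by
  ext M
  simp only [matchingsCrossingExcept, mem_filter, mem_matchings, mem_image, mem_pairings]
  constructor
  · rintro ⟨hM, h⟩
    exact ⟨M.erase e, hM.isPairing_erase h hk, insert_erase h.1⟩
  · rintro ⟨M, hM, rfl⟩
    exact ⟨hM.isRMatching_insert he he2 hk, hM.crossesExcept_insert⟩

lemma card_matchingsCrossingExcept (he : e ⊆ Icc 1 (2 * n)) (he2 : e.card = 2)
    (hk : k ≤ 2 * n) {m : ℕ} (hL : (Icc 1 k \ e).card = m) (hR : (Ioc k (2 * n) \ e).card = m) :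
    (matchingsCrossingExcept n k e).card = m.factorial := by
  have hLR : Disjoint (Icc 1 k \ e) (Ioc k (2 * n) \ e) := by
    refine Disjoint.mono sdiff_subset sdiff_subset (disjoint_left.2 fun x hx hx' => ?_)
    rw [mem_Icc] at hx
    rw [mem_Ioc] at hx'
    omega
  rw [matchingsCrossingExcept_eq_image he he2 hk, card_image_insert_pairings sdiff_disjoint,
    card_pairings hLR hL hR]

lemma disjoint_matchingsCrossingExcept {k' : ℕ} {e' : Finset ℕ} (hne : e ≠ e')
    (h : ¬Crosses k e') :
    Disjoint (matchingsCrossingExcept n k e) (matchingsCrossingExcept n k' e') :=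
  disjoint_left.2 fun _ hM hM' => h ((mem_filter.1 hM).2.2 e' (mem_filter.1 hM').2.1 hne.symm)

end CrossingExcept

def upperPairs (n : ℕ) : Finset (Finset ℕ) := (Icc (n + 1) (2 * n)).powersetCard 2

def lowerPairs (n : ℕ) : Finset (Finset ℕ) := (Icc 1 (n - 1)).powersetCard 2

namespace IsRMatching

variable {n k : ℕ} {M : Finset (Finset ℕ)} {e : Finset ℕ}

lemma sockNum_eq_pred (hM : IsRMatching 2 n M) {k₀ : ℕ} (h : CrossesExcept k₀ e M)
    (hk₀ : k₀ ∈ Icc 1 (2 * n)) (hnc : ∀ k ∈ Icc 1 (2 * n), ∃ f ∈ M, ¬Crosses k f) :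
    sockNum n M = n - 1 := by
  have hcard := hM.card_eq two_pos
  refine le_antisymm (Finset.sup_le fun k hk => ?_) ?_
  · obtain ⟨f, hf, hnf⟩ := hnc k hk
    have := crossAt_lt_card hf hnf
    omega
  · calc n - 1 = (M.erase e).card := by rw [card_erase_of_mem h.1, hcard]
      _ ≤ crossAt k₀ M := h.card_erase_le_crossAt
      _ ≤ sockNum n M := le_sup (f := fun k => crossAt k M) hk₀

lemma sockNum_eq_pred_of_mem_upperPairs (hM : IsRMatching 2 n M) (he : e ∈ upperPairs n)
    (h : CrossesExcept (n - 1) e M) : sockNum n M = n - 1 := by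
  obtain ⟨hsub, he2⟩ := mem_powersetCard.1 he
  have hn : 2 ≤ n := by
    have := card_le_card hsub
    rw [he2, Nat.card_Icc] at this
    omega
  refine hM.sockNum_eq_pred h (mem_Icc.2 ⟨by omega, by omega⟩) fun k hk => ?_
  by_cases hkn : k < n
  · refine ⟨e, h.1, not_crosses_iff.2 (Or.inl (disjoint_left.2 fun x hx hx' => ?_))⟩
    have := mem_Icc.1 (hsub hx)
    have := mem_Icc.1 hx'
    omega
  -- the edge at `n` lies in `[1, n]`
  obtain ⟨f, hf, hnf⟩ :=
    hM.isPartitionOf.exists_mem (mem_Icc.2 ⟨by omega, by omega⟩ : n ∈ Icc 1 (2 * n))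
  have hfe : f ≠ e := by
    rintro rfl
    have := mem_Icc.1 (hsub hnf)
    omega
  obtain ⟨a, b, ha, hak, hkb, -, -, -, rfl⟩ := hM.exists_eq_crossing_pair h hf hfe
  refine ⟨{a, b}, hf, ?_⟩
  rw [crosses_pair_iff ha (by omega)]
  simp only [mem_insert, mem_singleton] at hnf
  omega

lemma sockNum_eq_pred_of_mem_lowerPairs (hM : IsRMatching 2 n M) (he : e ∈ lowerPairs n)
    (h : CrossesExcept (n + 1) e M) : sockNum n M = n - 1 := by
  obtain ⟨hsub, he2⟩ := mem_powersetCard.1 he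
  have hn : 3 ≤ n := by
    have := card_le_card hsub
    rw [he2, Nat.card_Icc] at this
    omega
  refine hM.sockNum_eq_pred h (mem_Icc.2 ⟨by omega, by omega⟩) fun k hk => ?_
  by_cases hkn : n - 1 ≤ k
  · exact ⟨e, h.1, not_crosses_iff.2 (Or.inr (hsub.trans (Icc_subset_Icc le_rfl hkn)))⟩
  -- the edge at `n + 1` lies in `[n + 1, 2n]`
  obtain ⟨f, hf, hnf⟩ :=
    hM.isPartitionOf.exists_mem (mem_Icc.2 ⟨by omega, by omega⟩ : n + 1 ∈ Icc 1 (2 * n))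
  have hfe : f ≠ e := by
    rintro rfl
    have := mem_Icc.1 (hsub hnf)
    omega
  obtain ⟨a, b, ha, hak, hkb, -, -, -, rfl⟩ := hM.exists_eq_crossing_pair h hf hfe
  refine ⟨{a, b}, hf, ?_⟩
  rw [crosses_pair_iff ha (by omega)]
  simp only [mem_insert, mem_singleton] at hnf
  omega

lemma crossesExcept_cases (hM : IsRMatching 2 n M) (hk : k ≤ 2 * n) (h : CrossesExcept k e M)
    (hnc : ¬Crosses k e) :
    (k = n - 1 ∧ Disjoint e (Icc 1 k)) ∨ (k = n + 1 ∧ e ⊆ Icc 1 k) := by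
  have hcard := hM.card_eq two_pos
  have hn : 1 ≤ n := hcard ▸ card_pos.2 ⟨e, h.1⟩
  have hcount := hM.isPartitionOf.card_inter (Icc 1 k)
  rw [inter_eq_right.2 (Icc_subset_Icc le_rfl hk), Nat.card_Icc, ← add_sum_erase M _ h.1,
    sum_congr rfl fun f hf => (h.2 f (mem_of_mem_erase hf) (ne_of_mem_erase hf)).card_inter_eq_one
      (hM.1 f (mem_of_mem_erase hf)), sum_const, card_erase_of_mem h.1, hcard, smul_eq_mul,
    mul_one] at hcount
  rcases not_crosses_iff.1 hnc with hd | hs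
  · rw [disjoint_iff_inter_eq_empty.1 hd, card_empty] at hcount
    exact Or.inl ⟨by omega, hd⟩
  · rw [inter_eq_left.2 hs, hM.1 e h.1] at hcount
    exact Or.inr ⟨by omega, hs⟩

lemma mem_upperPairs_of_crossesExcept (hM : IsRMatching 2 n M) (hmid : crossAt n M < M.card)
    (h : CrossesExcept (n - 1) e M) (hd : Disjoint e (Icc 1 (n - 1))) : e ∈ upperPairs n := by
  obtain ⟨u, v, hu, huv, hv, rfl⟩ := hM.exists_eq_pair h.1
  have hun : n ≤ u := by
    by_contra
    exact disjoint_left.1 hd (mem_insert_self u {v}) (mem_Icc.2 ⟨hu, by omega⟩)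
  refine pair_mem_powersetCard_Icc huv (Nat.lt_of_le_of_ne hun fun hnu => hmid.ne ?_) hv
  -- if `n` were an endpoint of the special edge, every edge would cross `n`
  refine crossAt_eq_card fun f hf => ?_
  by_cases hfe : f = {u, v}
  · rw [hfe, crosses_pair_iff hu huv]
    omega
  obtain ⟨a, b, ha, hak, hkb, hb, -, hbe, rfl⟩ := hM.exists_eq_crossing_pair h hf hfe
  simp only [mem_insert, mem_singleton] at hbe
  rw [crosses_pair_iff ha (by omega)]
  omega

lemma crossesExcept_pred_or_mem_lowerPairs (hM : IsRMatching 2 n M)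
    (hmid : crossAt n M < M.card) (h : CrossesExcept (n + 1) e M) (hs : e ⊆ Icc 1 (n + 1)) :
    (∃ e' ∈ upperPairs n, CrossesExcept (n - 1) e' M) ∨ e ∈ lowerPairs n := by
  obtain ⟨u, v, hu, huv, hv, rfl⟩ := hM.exists_eq_pair h.1
  have hvn := (mem_Icc.1 (hs (mem_insert_of_mem (mem_singleton_self v)))).2
  have hv₁ : v ≠ n + 1 := by
    rintro rfl
    refine hmid.ne (crossAt_eq_card fun f hf => ?_)
    by_cases hfe : f = {u, n + 1}
    · rw [hfe, crosses_pair_iff hu huv]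
      omega
    obtain ⟨a, b, ha, hak, hkb, hb, hae, -, rfl⟩ := hM.exists_eq_crossing_pair h hf hfe
    simp only [mem_insert, mem_singleton] at hae
    rw [crosses_pair_iff ha (by omega)]
    omega
  by_cases hv₀ : v ≠ n
  · exact Or.inr (pair_mem_powersetCard_Icc huv hu (by omega))
  -- if the special edge ends at `n`, the edge at `n + 1` is the special edge at `n - 1`
  obtain rfl := not_not.1 hv₀
  obtain ⟨f₁, hf₁, hnf₁⟩ :=
    hM.isPartitionOf.exists_mem (mem_Icc.2 ⟨by omega, by omega⟩ : v + 1 ∈ Icc 1 (2 * v))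
  have hf₁e : f₁ ≠ {u, v} := by
    rintro rfl
    simp only [mem_insert, mem_singleton] at hnf₁
    omega
  obtain ⟨a₁, b₁, -, -, hkb₁, hb₁, -, -, rfl⟩ := hM.exists_eq_crossing_pair h hf₁ hf₁e
  obtain rfl : a₁ = v + 1 := by
    simp only [mem_insert, mem_singleton] at hnf₁
    omega
  refine Or.inl ⟨{v + 1, b₁}, pair_mem_powersetCard_Icc hkb₁ le_rfl hb₁, hf₁,
    fun f hf hff₁ => ?_⟩
  by_cases hfe : f = {u, v}
  · rw [hfe, crosses_pair_iff hu huv]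
    omega
  obtain ⟨a, b, ha, hak, hkb, hb, hae, -, rfl⟩ := hM.exists_eq_crossing_pair h hf hfe
  have ha₁ := hM.notMem_of_ne hf₁ hf hff₁ (mem_insert_self (v + 1) {b₁})
  simp only [mem_insert, mem_singleton] at hae ha₁
  rw [crosses_pair_iff ha (by omega)]
  omega

lemma exists_crossesExcept_of_sockNum_eq_pred (hM : IsRMatching 2 n M) (hn : 1 ≤ n)
    (hs : sockNum n M = n - 1) :
    (∃ e ∈ upperPairs n, CrossesExcept (n - 1) e M) ∨
      ∃ e ∈ lowerPairs n, CrossesExcept (n + 1) e M := by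
  have hcard := hM.card_eq two_pos
  have hmid : crossAt n M < M.card := by
    have := le_sup (f := fun k => crossAt k M) (mem_Icc.2 ⟨hn, by omega⟩ : n ∈ Icc 1 (2 * n))
    rw [← sockNum, hs] at this
    omega
  obtain ⟨k, hk, hk_eq⟩ :=
    exists_mem_eq_sup (Icc 1 (2 * n)) (nonempty_Icc.2 (by omega)) fun k => crossAt k M
  rw [sockNum, hk_eq] at hs
  obtain ⟨e, h, hnc⟩ :=
    exists_crossesExcept_of_crossAt_add_one (by omega : crossAt k M + 1 = M.card)
  rcases hM.crossesExcept_cases (mem_Icc.1 hk).2 h hnc with ⟨rfl, hd⟩ | ⟨rfl, hsub⟩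
  · exact Or.inl ⟨e, hM.mem_upperPairs_of_crossesExcept hmid h hd, h⟩
  · exact (hM.crossesExcept_pred_or_mem_lowerPairs hmid h hsub).imp id fun he => ⟨e, he, h⟩

end IsRMatching

noncomputable def leftPeakMatchings (n : ℕ) : Finset (Finset (Finset ℕ)) :=
  (upperPairs n).biUnion (matchingsCrossingExcept n (n - 1))

noncomputable def rightPeakMatchings (n : ℕ) : Finset (Finset (Finset ℕ)) :=
  (lowerPairs n).biUnion (matchingsCrossingExcept n (n + 1))

lemma filter_sockNum_eq_pred {n : ℕ} (hn : 1 ≤ n) :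
    (matchings 2 n).filter (fun M => sockNum n M = n - 1) =
      leftPeakMatchings n ∪ rightPeakMatchings n := by
  ext M
  simp only [leftPeakMatchings, rightPeakMatchings, matchingsCrossingExcept, mem_union,
    mem_biUnion, mem_filter, mem_matchings]
  constructor
  · rintro ⟨hM, hs⟩
    rcases hM.exists_crossesExcept_of_sockNum_eq_pred hn hs with ⟨e, he, h⟩ | ⟨e, he, h⟩
    exacts [Or.inl ⟨e, he, hM, h⟩, Or.inr ⟨e, he, hM, h⟩]
  · rintro (⟨e, he, hM, h⟩ | ⟨e, he, hM, h⟩)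
    exacts [⟨hM, hM.sockNum_eq_pred_of_mem_upperPairs he h⟩,
      ⟨hM, hM.sockNum_eq_pred_of_mem_lowerPairs he h⟩]

lemma card_leftPeakMatchings (n : ℕ) :
    (leftPeakMatchings n).card = n.choose 2 * (n - 1).factorial := by
  have hdisj : ∀ e ∈ upperPairs n, Disjoint e (Icc 1 (n - 1)) :=
    fun e he => disjoint_left.2 fun x hx hx' => by
      have := mem_Icc.1 ((mem_powersetCard.1 he).1 hx)
      have := mem_Icc.1 hx'
      omega
  rw [leftPeakMatchings, card_biUnion fun e _ e' he' hne =>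
      disjoint_matchingsCrossingExcept hne (not_crosses_iff.2 (Or.inl (hdisj e' he'))),
    sum_congr rfl fun e he => ?_, sum_const, upperPairs, card_powersetCard, Nat.card_Icc,
    smul_eq_mul, show 2 * n + 1 - (n + 1) = n by omega]
  obtain ⟨hsub, he2⟩ := mem_powersetCard.1 he
  have hn := card_le_card hsub
  rw [he2, Nat.card_Icc] at hn
  refine card_matchingsCrossingExcept (hsub.trans (Icc_subset_Icc (by omega) le_rfl)) he2
    (by omega) (by rw [sdiff_eq_self_of_disjoint (hdisj e he).symm, Nat.card_Icc]; omega) ?_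
  rw [card_sdiff_of_subset fun x hx => ?_, Nat.card_Ioc, he2]
  · omega
  · have := mem_Icc.1 (hsub hx)
    exact mem_Ioc.2 ⟨by omega, by omega⟩

lemma card_rightPeakMatchings (n : ℕ) :
    (rightPeakMatchings n).card = (n - 1).choose 2 * (n - 1).factorial := by
  have hsub_Icc : ∀ e ∈ lowerPairs n, e ⊆ Icc 1 (n + 1) := fun e he =>
    (mem_powersetCard.1 he).1.trans (Icc_subset_Icc le_rfl (by omega))
  rw [rightPeakMatchings, card_biUnion fun e _ e' he' hne =>
      disjoint_matchingsCrossingExcept hne (not_crosses_iff.2 (Or.inr (hsub_Icc e' he'))),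
    sum_congr rfl fun e he => ?_, sum_const, lowerPairs, card_powersetCard, Nat.card_Icc,
    smul_eq_mul, Nat.add_sub_cancel]
  obtain ⟨hsub, he2⟩ := mem_powersetCard.1 he
  have hn := card_le_card hsub
  rw [he2, Nat.card_Icc] at hn
  have hsub' := hsub_Icc e he
  refine card_matchingsCrossingExcept (hsub'.trans (Icc_subset_Icc le_rfl (by omega))) he2
    (by omega) (by rw [card_sdiff_of_subset hsub', Nat.card_Icc, he2]; omega) ?_
  rw [sdiff_eq_self_of_disjoint (disjoint_left.2 fun x hx hx' => ?_), Nat.card_Ioc]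
  · omega
  · have := mem_Ioc.1 hx
    have := mem_Icc.1 (hsub' hx')
    omega

lemma disjoint_leftPeakMatchings_rightPeakMatchings (n : ℕ) :
    Disjoint (leftPeakMatchings n) (rightPeakMatchings n) := by
  simp only [leftPeakMatchings, rightPeakMatchings, disjoint_biUnion_left,
    disjoint_biUnion_right]
  intro e' he' e he
  obtain ⟨hsub, he2⟩ := mem_powersetCard.1 he
  have hsub' := (mem_powersetCard.1 he').1
  refine disjoint_matchingsCrossingExcept ?_ (not_crosses_iff.2 (Or.inr hsub'))
  rintro rfl
  obtain ⟨x, hx⟩ := card_pos.1 (he2 ▸ two_pos)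
  have := mem_Icc.1 (hsub hx)
  have := mem_Icc.1 (hsub' hx)
  omega

lemma choose_two_add_choose_two_pred (n : ℕ) :
    n.choose 2 + (n - 1).choose 2 = (n - 1) ^ 2 := by
  obtain _ | m := n
  · rfl
  rw [Nat.add_sub_cancel]
  induction m with
  | zero => rfl
  | succ m ih =>
    have h₁ : (m + 1 + 1).choose 2 = (m + 1).choose 1 + (m + 1).choose 2 :=
      Nat.choose_succ_succ' _ _
    have h₂ : (m + 1).choose 2 = m.choose 1 + m.choose 2 := Nat.choose_succ_succ' _ _
    rw [Nat.choose_one_right] at h₁ h₂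
    rw [h₁, h₂]
    rw [h₂] at ih
    nlinarith [ih]

theorem stmt19 (n : ℕ) (hn : 1 ≤ n) :
    ((matchings 2 n).filter (fun M => sockNum n M = n - 1)).card =
      (n - 1) ^ 2 * (n - 1).factorial := by
  rw [filter_sockNum_eq_pred hn,
    card_union_of_disjoint (disjoint_leftPeakMatchings_rightPeakMatchings n),
    card_leftPeakMatchings, card_rightPeakMatchings, ← add_mul, choose_two_add_choose_two_pred]
end
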